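/- Every best match graph (G,σ) has a least-resolved tree that is unique up to isomorphism fixing the leaves: there exists a leaf-colored tree (T*,σ) with 𝔅(T*,σ) = (G,σ) such that every leaf-colored tree (T,σ) with 𝔅(T,σ) = (G,σ) displays T*, and any two trees with this property are isomorphic by an isomorphism fixing the leaf set. -/

import Mathlib

/-!
The clusters shared by all trees explaining `(G,σ)` form a hierarchy, whose tree `T*` is displayed
by every explaining tree; trees with the same clusters are isomorphic, which gives uniqueness.
A tree explains `(G,σ)` as soon as it displays every informative triple and no forbidden one.
Forbidden triples are not displayed by an explaining tree, hence not by `T*`, which it refines.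
For informative triples the key fact is that, in any explaining tree, the connected component of
`a` in the Aho graph of the informative triples inside a cluster `C` is again a cluster. If `T*`
did not display `ab|c`, then `c` would lie in the smallest cluster `C` of `T*` containing `a, b`;
the component of `a` in `C` contains `b` and is a common cluster, hence contains `C`, yet in an
explaining tree it lies below a single child of the vertex with cluster `C`.
-/

/-- A planted phylogenetic rooted tree, encoded by a parent function on a
finite vertex set.  The root `0_T` is a fixed point of `parent`; every vertex
reaches the root by iterating `parent`; the root has exactly one child
(`planted`); and every inner vertex (non-root vertex having a child) has at
least two children (`phylo`). -/
structure PPTree where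
  V : Type
  [fintypeV : Fintype V]
  [decEqV : DecidableEq V]
  root : V
  parent : V → V
  parent_root : parent root = root
  reach : ∀ v : V, ∃ n : ℕ, parent^[n] v = root
  planted : ∃! v : V, v ≠ root ∧ parent v = root
  phylo : ∀ v : V, v ≠ root → (∃ u, parent u = v ∧ u ≠ v) →
      ∃ u w, parent u = v ∧ parent w = v ∧ u ≠ w ∧ u ≠ v ∧ w ≠ v

attribute [instance] PPTree.fintypeV PPTree.decEqV

namespace PPTree

variable (T : PPTree)

/-- `T.le x y` means `x ⪯_T y`, i.e. `y` is an ancestor of `x` (or `x = y`). -/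
def le (x y : T.V) : Prop := ∃ n : ℕ, T.parent^[n] x = y

/-- `T.lt x y` means `x ≺_T y`. -/
def lt (x y : T.V) : Prop := T.le x y ∧ x ≠ y

/-- Leaves are the `⪯_T`-minimal vertices, i.e. vertices without children. -/
def isLeaf (v : T.V) : Prop := ∀ u, T.parent u = v → u = v

/-- Inner vertices: neither leaves nor the planted root. -/
def inner (v : T.V) : Prop := v ≠ T.root ∧ ¬ T.isLeaf v

/-- The last common ancestor of two vertices: the `⪯_T`-minimal common
ancestor. -/
noncomputable def lca (x y : T.V) : T.V :=
  @Classical.epsilon _ ⟨T.root⟩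
    fun v => T.le x v ∧ T.le y v ∧ ∀ w, T.le x w → T.le y w → T.le v w

/-- The last common ancestor of a set of vertices. -/
noncomputable def lcaSet (A : Set T.V) : T.V :=
  @Classical.epsilon _ ⟨T.root⟩
    fun v => (∀ a ∈ A, T.le a v) ∧ ∀ w, (∀ a ∈ A, T.le a w) → T.le v w

/-- `ρ_T`, the unique child of the planted root. -/
noncomputable def rho : T.V := T.planted.choose

theorem rho_ne_root : T.rho ≠ T.root := T.planted.choose_spec.1.1

/-- Edges of `T`, identified with their child endpoint: the vertex `v ≠ 0_T`
represents the edge `(parent v, v)`. -/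
abbrev Edge := {v : T.V // v ≠ T.root}

/-- The union `V(T) ∪ E(T)`. -/
abbrev VE := T.V ⊕ T.Edge

/-- The ancestor order `⪯_T` extended to `V(T) ∪ E(T)`: for an edge `e = uv`
(`u` the parent of `v`), `x ⪯ e` iff `x ⪯ v`, `e ⪯ x` iff `u ⪯ x`, and
`e ⪯ f` iff the child endpoints are comparable accordingly. -/
def leVE : T.VE → T.VE → Prop
  | Sum.inl x, Sum.inl y => T.le x y
  | Sum.inl x, Sum.inr e => T.le x e.1
  | Sum.inr e, Sum.inl y => T.le (T.parent e.1) y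
  | Sum.inr e, Sum.inr f => T.le e.1 f.1

def ltVE (a b : T.VE) : Prop := T.leVE a b ∧ a ≠ b

/-- Two elements of `V(T) ∪ E(T)` are comparable. -/
def cmpVE (a b : T.VE) : Prop := T.leVE a b ∨ T.leVE b a

/-- Membership in `L(T)` for elements of `V(T) ∪ E(T)`. -/
def isLeafVE : T.VE → Prop
  | Sum.inl v => T.isLeaf v
  | Sum.inr _ => False

/-- Map an element of `V(T) ∪ E(T)` to a vertex (an edge `uv` is sent to its
child endpoint `v`). -/
def toVertex : T.VE → T.V
  | Sum.inl v => v
  | Sum.inr e => e.1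

end PPTree

/-- Axioms (R0)–(R3) of a reconciliation map `μ : V(T) → V(S) ∪ E(S)`. -/
structure IsRecon (T S : PPTree) (μ : T.V → S.VE) : Prop where
  R0 : ∀ x, μ x = Sum.inl S.root ↔ x = T.root
  R1 : ∀ x, S.isLeafVE (μ x) ↔ T.isLeaf x
  R2 : ∀ x y, T.lt y x → (∃ u, μ x = Sum.inl u) → (∃ v, μ y = Sum.inl v) → μ x ≠ μ y
  R3 : ∀ x y, T.lt y x → ¬ S.ltVE (μ x) (μ y)

/-- A reconciliation is HGT-free if the images of the endpoints of every edge
of `T` are `⪯_S`-comparable. -/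
def IsHGTFree (T S : PPTree) (μ : T.V → S.VE) : Prop :=
  ∀ v : T.V, v ≠ T.root → S.cmpVE (μ (T.parent v)) (μ v)

/-- `(T,S,μ,σ)` is a σ-reconciliation when `μ` restricted to `L(T)` equals
`σ`. -/
def SigmaCompat (T S : PPTree) (μ : T.V → S.VE) (σ : T.V → S.V) : Prop :=
  ∀ x, T.isLeaf x → μ x = Sum.inl (σ x)

/-- A time map for `T`. -/
def IsTimeMap (T : PPTree) (τ : T.V → ℝ) : Prop :=
  ∀ x y, T.lt x y → τ x < τ y

/-- Axioms (S0)–(S3) of a relaxed scenario `(T,S,μ,τ_T,τ_S)`. -/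
structure IsRelaxedScenario (T S : PPTree) (μ : T.V → S.VE)
    (τT : T.V → ℝ) (τS : S.V → ℝ) : Prop where
  timeT : IsTimeMap T τT
  timeS : IsTimeMap S τS
  S0 : ∀ x, μ x = Sum.inl S.root ↔ x = T.root
  S1 : ∀ x, S.isLeafVE (μ x) ↔ T.isLeaf x
  S2 : ∀ x v, μ x = Sum.inl v → τS v = τT x
  S3 : ∀ x (e : S.Edge), μ x = Sum.inr e → τS e.1 < τT x ∧ τT x < τS (S.parent e.1)

/-- A planted phylogenetic tree whose leaf set is (identified with) the finite
type `L` via the embedding `emb`. -/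
structure LeafTree (L : Type) [Fintype L] [DecidableEq L] extends PPTree where
  emb : L → toPPTree.V
  emb_inj : Function.Injective emb
  emb_leaf : ∀ v : L, toPPTree.isLeaf (emb v)
  emb_surj : ∀ l, toPPTree.isLeaf l → ∃ v : L, emb v = l

/-- The tree `T` displays the rooted triple `ab|c`:
`lca(a,b) ≺ lca(a,c) = lca(b,c)`. -/
def displaysTriple (T : PPTree) (a b c : T.V) : Prop :=
  T.lt (T.lca a b) (T.lca a c) ∧ T.lca a c = T.lca b c

section BMG

variable {V Y : Type} [Fintype V] [DecidableEq V]

/-- `y` is a best match of `x` in the leaf-colored tree `(T,σ)`: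
`σ(x) ≠ σ(y)` and `lca(x,y) ⪯ lca(x,y')` for all leaves `y'` of the same color
as `y`. -/
def LeafTree.bestMatch (T : LeafTree V) (σ : V → Y) (x y : V) : Prop :=
  σ x ≠ σ y ∧ ∀ y' : V, σ y' = σ y →
    T.toPPTree.le (T.toPPTree.lca (T.emb x) (T.emb y))
      (T.toPPTree.lca (T.emb x) (T.emb y'))

/-- `(G,σ)` is the best match graph `𝔅(T,σ)` of the leaf-colored tree
`(T,σ)`. -/
def Explains (T : LeafTree V) (σ : V → Y) (G : V → V → Prop) : Prop :=
  ∀ x y : V, G x y ↔ T.bestMatch σ x y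

/-- The triple `ab|b'` is informative for `(G,σ)`. -/
def Informative (G : V → V → Prop) (σ : V → Y) (a b b' : V) : Prop :=
  a ≠ b ∧ a ≠ b' ∧ b ≠ b' ∧ σ a ≠ σ b ∧ σ b = σ b' ∧ G a b ∧ ¬ G a b'

/-- The triple `ab|b'` is forbidden for `(G,σ)`. -/
def Forbidden (G : V → V → Prop) (σ : V → Y) (a b b' : V) : Prop :=
  a ≠ b ∧ a ≠ b' ∧ b ≠ b' ∧ σ a ≠ σ b ∧ σ b = σ b' ∧ G a b ∧ G a b'

end BMG

namespace PPTree

variable {T : PPTree} {x y z u v w : T.V}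

theorem le_refl (x : T.V) : T.le x x := ⟨0, rfl⟩

theorem le_trans (hxy : T.le x y) (hyz : T.le y z) : T.le x z := by
  obtain ⟨n, rfl⟩ := hxy
  obtain ⟨m, rfl⟩ := hyz
  exact ⟨m + n, Function.iterate_add_apply _ m n x⟩

theorem le_parent (x : T.V) : T.le x (T.parent x) := ⟨1, rfl⟩

theorem le_root (x : T.V) : T.le x T.root := T.reach x

theorem iterate_parent_root (n : ℕ) : T.parent^[n] T.root = T.root :=
  Function.iterate_fixed T.parent_root n

theorem parent_ne_self (hx : x ≠ T.root) : T.parent x ≠ x := by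
  intro h
  obtain ⟨n, hn⟩ := T.reach x
  exact hx (Function.iterate_fixed h n ▸ hn)

theorem le_total_of_le (hy : T.le x y) (hz : T.le x z) : T.le y z ∨ T.le z y := by
  obtain ⟨n, rfl⟩ := hy
  obtain ⟨m, rfl⟩ := hz
  rcases Nat.le_total n m with h | h
  · exact Or.inl ⟨m - n, by rw [← Function.iterate_add_apply, Nat.sub_add_cancel h]⟩
  · exact Or.inr ⟨n - m, by rw [← Function.iterate_add_apply, Nat.sub_add_cancel h]⟩

theorem parent_le_of_le_of_ne (h : T.le x y) (hne : x ≠ y) : T.le (T.parent x) y := by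
  obtain ⟨_ | n, rfl⟩ := h
  · exact absurd rfl hne
  · exact ⟨n, (Function.iterate_succ_apply _ n x).symm⟩

theorem le_or_parent_le (hv : T.le x v) (hw : T.le x w) : T.le w v ∨ T.le (T.parent v) w := by
  rcases le_total_of_le hv hw with h | h
  · by_cases hvw : v = w
    · exact Or.inl (hvw ▸ le_refl v)
    · exact Or.inr (parent_le_of_le_of_ne h hvw)
  · exact Or.inl h

theorem eq_of_le_leaf (hl : T.isLeaf y) (h : T.le x y) : x = y := by
  obtain ⟨n, hn⟩ := h
  induction n generalizing x with
  | zero => exact hn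
  | succ n ih => exact hl x (ih hn)

noncomputable def depth (T : PPTree) (v : T.V) : ℕ := Nat.find (T.reach v)

theorem depth_lt_of_le_of_ne (h : T.le x y) (hne : x ≠ y) : T.depth y < T.depth x := by
  obtain ⟨n, rfl⟩ := h
  have hx : T.parent^[T.depth x] x = T.root := Nat.find_spec (T.reach x)
  have hn : n ≠ 0 := by rintro rfl; exact hne rfl
  rcases le_or_gt n (T.depth x) with hle | hlt
  · have hy : T.parent^[T.depth x - n] (T.parent^[n] x) = T.root := by
      rwa [← Function.iterate_add_apply, Nat.sub_add_cancel hle]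
    exact lt_of_le_of_lt (Nat.find_min' _ hy) (by omega)
  · have hy : T.parent^[n] x = T.root := by
      rw [← Nat.sub_add_cancel hlt.le, Function.iterate_add_apply, hx, iterate_parent_root]
    have hx0 : T.depth x ≠ 0 := fun h0 => hne (by rw [hy, ← hx, h0]; rfl)
    have hy0 : T.depth (T.parent^[n] x) = 0 := (Nat.find_eq_zero _).2 hy
    omega

theorem le_antisymm (hxy : T.le x y) (hyx : T.le y x) : x = y := by
  by_contra hne
  exact (depth_lt_of_le_of_ne hxy hne).asymm (depth_lt_of_le_of_ne hyx (Ne.symm hne))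

theorem exists_child_le (h : T.le x y) (hne : x ≠ y) :
    ∃ c, T.parent c = y ∧ c ≠ y ∧ T.le x c := by
  classical
  have hspec : T.parent^[Nat.find h] x = y := Nat.find_spec h
  have hpos : Nat.find h ≠ 0 := fun h0 => hne (by rw [h0] at hspec; exact hspec)
  refine ⟨T.parent^[Nat.find h - 1] x, ?_, fun hc => Nat.find_min h (by omega) hc, ⟨_, rfl⟩⟩
  rw [← Function.iterate_succ_apply' T.parent, Nat.succ_eq_add_one, Nat.sub_add_cancel
    (Nat.one_le_iff_ne_zero.2 hpos), hspec]

theorem parent_rho : T.parent T.rho = T.root := T.planted.choose_spec.1.2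

theorem eq_rho (hv : v ≠ T.root) (hp : T.parent v = T.root) : v = T.rho :=
  T.planted.choose_spec.2 v ⟨hv, hp⟩

theorem le_rho (hv : v ≠ T.root) : T.le v T.rho := by
  obtain ⟨c, hc, hcr, hvc⟩ := exists_child_le (le_root v) hv
  exact eq_rho hcr hc ▸ hvc

theorem eq_of_le_of_parent_eq (h : T.le x y) (hp : T.parent x = T.parent y)
    (hy : T.parent y ≠ y) : x = y := by
  by_contra hne
  exact hy (le_antisymm (hp ▸ parent_le_of_le_of_ne h hne) (le_parent y))

theorem le_induction {P : T.V → Prop} (hw : P w)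
    (hstep : ∀ v, T.le (T.parent v) w → P (T.parent v) → P v) (hv : T.le v w) : P v := by
  obtain ⟨n, hn⟩ := hv
  induction n generalizing v with
  | zero => obtain rfl : v = w := hn; exact hw
  | succ n ih => exact hstep v ⟨n, hn⟩ (ih hn)

theorem exists_forall_le_of_forall_le {S : Set T.V} (hS : S.Nonempty) (hx : ∀ w ∈ S, T.le x w) :
    ∃ v ∈ S, ∀ w ∈ S, T.le v w := by
  obtain ⟨v, hv, hmax⟩ := S.exists_max_image T.depth S.toFinite hS
  refine ⟨v, hv, fun w hw => ?_⟩
  rcases le_total_of_le (hx v hv) (hx w hw) with h | h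
  · exact h
  · by_cases hwv : w = v
    · exact hwv ▸ le_refl w
    · exact absurd (hmax w hw) (depth_lt_of_le_of_ne h hwv).not_ge

theorem exists_leaf_le (v : T.V) : ∃ l, T.isLeaf l ∧ T.le l v := by
  obtain ⟨l, hl, hmax⟩ :=
    Set.exists_max_image {x | T.le x v} T.depth (Set.toFinite _) ⟨v, le_refl v⟩
  refine ⟨l, fun u hu => ?_, hl⟩
  by_contra hne
  have hul : T.le u l := hu ▸ le_parent u
  exact (depth_lt_of_le_of_ne hul hne).not_ge (hmax u (le_trans hul hl))

theorem lca_spec (x y : T.V) :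
    T.le x (T.lca x y) ∧ T.le y (T.lca x y) ∧ ∀ w, T.le x w → T.le y w → T.le (T.lca x y) w := by
  obtain ⟨v, ⟨hxv, hyv⟩, hv⟩ := exists_forall_le_of_forall_le (S := {w | T.le x w ∧ T.le y w})
    ⟨T.root, le_root x, le_root y⟩ fun _ hw => hw.1
  have hex : ∃ v, T.le x v ∧ T.le y v ∧ ∀ w, T.le x w → T.le y w → T.le v w :=
    ⟨v, hxv, hyv, fun w hxw hyw => hv w ⟨hxw, hyw⟩⟩
  exact Classical.epsilon_spec hex

theorem le_lca_left (x y : T.V) : T.le x (T.lca x y) := (lca_spec x y).1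

theorem le_lca_right (x y : T.V) : T.le y (T.lca x y) := (lca_spec x y).2.1

theorem lca_le (hx : T.le x w) (hy : T.le y w) : T.le (T.lca x y) w := (lca_spec x y).2.2 w hx hy

theorem lca_comm (x y : T.V) : T.lca x y = T.lca y x :=
  le_antisymm (lca_le (le_lca_right y x) (le_lca_left y x))
    (lca_le (le_lca_right x y) (le_lca_left x y))

theorem lcaSet_spec {S : Set T.V} (hS : S.Nonempty) :
    (∀ a ∈ S, T.le a (T.lcaSet S)) ∧ ∀ w, (∀ a ∈ S, T.le a w) → T.le (T.lcaSet S) w := by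
  obtain ⟨a, ha⟩ := hS
  have hex : ∃ v, (∀ a ∈ S, T.le a v) ∧ ∀ w, (∀ a ∈ S, T.le a w) → T.le v w :=
    exists_forall_le_of_forall_le (S := {w | ∀ b ∈ S, T.le b w}) ⟨T.root, fun b _ => le_root b⟩
      fun _ hw => hw a ha
  exact Classical.epsilon_spec hex

end PPTree

section Hierarchy

variable {V : Type}

structure IsHierarchy (H : Set (Set V)) : Prop where
  univ_mem : Set.univ ∈ H
  singleton_mem : ∀ x, {x} ∈ H
  empty_not_mem : ∅ ∉ H
  laminar : ∀ C ∈ H, ∀ D ∈ H, C ⊆ D ∨ D ⊆ C ∨ Disjoint C D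

namespace IsHierarchy

variable {H : Set (Set V)} (hH : IsHierarchy H) {C D : Set V} {x : V}
include hH

theorem nonempty (hC : C ∈ H) : C.Nonempty :=
  Set.nonempty_iff_ne_empty.2 fun h => hH.empty_not_mem (h ▸ hC)

theorem subset_or_subset (hC : C ∈ H) (hD : D ∈ H) (hxC : x ∈ C) (hxD : x ∈ D) :
    C ⊆ D ∨ D ⊆ C :=
  (hH.laminar C hC D hD).imp_right (Or.resolve_right · (Set.not_disjoint_iff.2 ⟨x, hxC, hxD⟩))

variable [Finite V]

theorem exists_isLeast_ssuperset (hC : C ∈ H) (hne : C ≠ Set.univ) :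
    ∃ D, IsLeast {D | D ∈ H ∧ C ⊂ D} D := by
  obtain ⟨D, ⟨hD, hCD⟩, hmin⟩ := Set.Finite.exists_minimal (s := {D | D ∈ H ∧ C ⊂ D})
    (Set.toFinite _) ⟨Set.univ, hH.univ_mem, Set.ssubset_univ_iff.2 hne⟩
  obtain ⟨x, hx⟩ := hH.nonempty hC
  refine ⟨D, ⟨hD, hCD⟩, fun E ⟨hE, hCE⟩ => ?_⟩
  exact (hH.subset_or_subset hD hE (hCD.subset hx) (hCE.subset hx)).elim id (hmin ⟨hE, hCE⟩)

/-- `none` is the planted root and `some C` the vertex with cluster `C`. -/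
noncomputable def parent : Option H → Option H
  | none => none
  | some C => if hC : C.1 = Set.univ then none
      else some ⟨_, (hH.exists_isLeast_ssuperset C.2 hC).choose_spec.1.1⟩

theorem parent_some_eq_none_iff {C : H} : hH.parent (some C) = none ↔ C.1 = Set.univ := by
  by_cases hC : C.1 = Set.univ <;> simp [parent, hC]

theorem parent_some_eq_some_iff {C D : H} :
    hH.parent (some C) = some D ↔ IsLeast {E | E ∈ H ∧ C.1 ⊂ E} D.1 := by
  by_cases hC : C.1 = Set.univ
  · simp only [parent, dif_pos hC, reduceCtorEq, false_iff]
    exact fun h => (hC ▸ h.1.2).not_subset (Set.subset_univ _)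
  · have hspec := (hH.exists_isLeast_ssuperset C.2 hC).choose_spec
    simp only [parent, dif_neg hC, Option.some_inj]
    exact ⟨fun h => h ▸ hspec, fun hD => Subtype.ext (hspec.unique hD)⟩

theorem parent_some_eq_some_of_isLeast {C : H} (hD : IsLeast {E | E ∈ H ∧ C.1 ⊂ E} D) :
    hH.parent (some C) = some ⟨D, hD.1.1⟩ :=
  hH.parent_some_eq_some_iff.2 hD

theorem parent_some_ne_self (C : H) : hH.parent (some C) ≠ some C :=
  fun h => (hH.parent_some_eq_some_iff.1 h).1.2.ne rfl

theorem parent_ne_singleton (u : Option H) (x : V) :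
    hH.parent u ≠ some ⟨{x}, hH.singleton_mem x⟩ := by
  rcases u with _ | D
  · exact (Option.some_ne_none _).symm
  · intro h
    have hD := Set.ssubset_singleton_iff.1 (hH.parent_some_eq_some_iff.1 h).1.2
    exact hH.empty_not_mem (hD ▸ D.2)

theorem exists_parent_eq_some {C : H} (hx : x ∈ C.1) (hne : {x} ≠ C.1) :
    ∃ E : H, x ∈ E.1 ∧ hH.parent (some E) = some C := by
  obtain ⟨E, -, ⟨hE, hxE, hEC⟩, hmax⟩ := Set.Finite.exists_le_maximal
    (s := {E | E ∈ H ∧ x ∈ E ∧ E ⊂ C.1}) (Set.toFinite _)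
    ⟨hH.singleton_mem x, rfl, (Set.singleton_subset_iff.2 hx).ssubset_of_ne hne⟩
  refine ⟨⟨E, hE⟩, hxE, hH.parent_some_eq_some_iff.2 ⟨⟨C.2, hEC⟩, fun F ⟨hF, hEF⟩ => ?_⟩⟩
  refine (hH.subset_or_subset C.2 hF hx (hEF.subset hxE)).elim id fun hFC => ?_
  by_contra hCF
  exact hEF.not_subset (hmax ⟨hF, hEF.subset hxE, ssubset_of_subset_not_subset hFC hCF⟩
    hEF.subset)

theorem exists_iterate_parent_eq_none (v : Option H) : ∃ n, hH.parent^[n] v = none := by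
  rcases v with _ | C
  · exact ⟨0, rfl⟩
  induction C using WellFoundedGT.induction with
  | _ C ih =>
  by_cases hC : C.1 = Set.univ
  · exact ⟨1, hH.parent_some_eq_none_iff.2 hC⟩
  obtain ⟨D, hD⟩ := hH.exists_isLeast_ssuperset C.2 hC
  obtain ⟨n, hn⟩ := ih ⟨D, hD.1.1⟩ hD.1.2
  exact ⟨n + 1, by rw [Function.iterate_succ_apply, hH.parent_some_eq_some_of_isLeast hD, hn]⟩

theorem existsUnique_parent_eq_none : ∃! v : Option H, v ≠ none ∧ hH.parent v = none := by
  refine ⟨some ⟨_, hH.univ_mem⟩, ⟨Option.some_ne_none _, hH.parent_some_eq_none_iff.2 rfl⟩, ?_⟩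
  rintro (_ | C) ⟨hne, hC⟩
  · exact absurd rfl hne
  · exact congrArg some (Subtype.ext (hH.parent_some_eq_none_iff.1 hC))

theorem exists_two_children (v : Option H) (hv : v ≠ none)
    (hchild : ∃ u, hH.parent u = v ∧ u ≠ v) :
    ∃ u w, hH.parent u = v ∧ hH.parent w = v ∧ u ≠ w ∧ u ≠ v ∧ w ≠ v := by
  obtain ⟨_ | D, hD, hDv⟩ := hchild
  · exact absurd hD.symm hv
  obtain ⟨C, rfl⟩ := Option.ne_none_iff_exists'.1 hv
  have hDC := hH.parent_some_eq_some_iff.1 hD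
  obtain ⟨x, hxC, hxD⟩ := Set.exists_of_ssubset hDC.1.2
  have hsing : {x} ≠ C.1 := by
    intro hC
    obtain ⟨y, hy⟩ := hH.nonempty D.2
    have hyx : y ∈ ({x} : Set V) := hC ▸ hDC.1.2.subset hy
    exact hxD (Set.mem_singleton_iff.1 hyx ▸ hy)
  obtain ⟨E, hxE, hE⟩ := hH.exists_parent_eq_some hxC hsing
  refine ⟨some D, some E, hD, hE, ?_, hDv, ?_⟩
  · rintro ⟨⟩
    exact hxD hxE
  · rintro ⟨⟩
    exact hH.parent_some_ne_self _ hE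

theorem exists_singleton_of_isLeaf (l : Option H) (hl : ∀ u, hH.parent u = l → u = l) :
    ∃ x, some ⟨{x}, hH.singleton_mem x⟩ = l := by
  rcases l with _ | C
  · exact absurd (hl _ ((hH.parent_some_eq_none_iff (C := ⟨_, hH.univ_mem⟩)).2 rfl))
      (Option.some_ne_none _)
  obtain ⟨x, hx⟩ := hH.nonempty C.2
  by_cases hC : {x} = C.1
  · exact ⟨x, congrArg some (Subtype.ext hC)⟩
  · obtain ⟨E, -, hE⟩ := hH.exists_parent_eq_some hx hC
    exact absurd (hl _ hE ▸ hE) (hH.parent_some_ne_self C)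

theorem exists_iterate_parent_eq_some_iff {C D : H} :
    (∃ n, hH.parent^[n] (some C) = some D) ↔ C.1 ⊆ D.1 := by
  constructor
  · rintro ⟨n, hn⟩
    induction n generalizing C with
    | zero => exact (Option.some_inj.1 hn) ▸ subset_rfl
    | succ n ih =>
      rw [Function.iterate_succ_apply] at hn
      rcases hp : hH.parent (some C) with _ | C'
      · rw [hp, Function.iterate_fixed rfl] at hn
        exact absurd hn (Option.some_ne_none _).symm
      · rw [hp] at hn
        exact (hH.parent_some_eq_some_iff.1 hp).1.2.subset.trans (ih hn)
  · intro hCD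
    induction C using WellFoundedGT.induction with
    | _ C ih =>
    by_cases hC : C = D
    · exact ⟨0, hC ▸ rfl⟩
    have hCD' : C.1 ⊂ D.1 := hCD.ssubset_of_ne fun h => hC (Subtype.ext h)
    obtain ⟨E, hE⟩ := hH.exists_isLeast_ssuperset C.2
      fun h => hCD'.not_subset (h ▸ Set.subset_univ _)
    obtain ⟨n, hn⟩ := ih ⟨E, hE.1.1⟩ hE.1.2 (hE.2 ⟨D.2, hCD'⟩)
    exact ⟨n + 1, by rw [Function.iterate_succ_apply, hH.parent_some_eq_some_of_isLeast hE, hn]⟩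

end IsHierarchy

end Hierarchy

theorem SimpleGraph.Reachable.exists_adj_mem_not_mem {α : Type*} {G : SimpleGraph α} {S : Set α}
    {u v : α} (h : G.Reachable u v) (hu : u ∈ S) (hv : v ∉ S) :
    ∃ x y, G.Reachable u x ∧ G.Adj x y ∧ x ∈ S ∧ y ∉ S := by
  classical
  obtain ⟨p⟩ := h
  obtain ⟨d, hd, hd₁, hd₂⟩ := p.exists_boundary_dart S hu hv
  exact ⟨d.fst, d.snd, ⟨p.takeUntil _ (p.dart_fst_mem_support_of_mem_darts hd)⟩, d.adj, hd₁, hd₂⟩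

section AhoGraph

variable {V Y : Type} {G : V → V → Prop} {σ : V → Y} {C : Set V} {a b c : V}

/-- The Aho graph (as in BUILD) of the informative triples inside `C`. -/
def ahoGraph (G : V → V → Prop) (σ : V → Y) (C : Set V) : SimpleGraph V :=
  SimpleGraph.fromRel fun a b => a ∈ C ∧ b ∈ C ∧ ∃ c ∈ C, Informative G σ a b c

theorem ahoGraph_adj_of_informative (ha : a ∈ C) (hb : b ∈ C) (hc : c ∈ C)
    (h : Informative G σ a b c) : (ahoGraph G σ C).Adj a b :=
  (SimpleGraph.fromRel_adj _ _ _).2 ⟨h.1, Or.inl ⟨ha, hb, c, hc, h⟩⟩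

theorem mem_of_ahoGraph_reachable (ha : a ∈ C) (h : (ahoGraph G σ C).Reachable a b) : b ∈ C := by
  induction (SimpleGraph.reachable_iff_reflTransGen _ _).1 h with
  | refl => exact ha
  | tail _ hadj _ =>
    rcases ((SimpleGraph.fromRel_adj _ _ _).1 hadj).2 with ⟨-, hc, -⟩ | ⟨hc, -⟩ <;> exact hc

end AhoGraph

section LeastResolved

variable {V : Type} [Fintype V] [DecidableEq V]

/-- The cluster of a vertex `v`: the set of leaves below `v`. -/
def LeafTree.cluster (T : LeafTree V) (v : T.toPPTree.V) : Set V :=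
  {x : V | T.toPPTree.le (T.emb x) v}

/-- The set of clusters of a tree. -/
def LeafTree.clusters (T : LeafTree V) : Set (Set V) :=
  Set.range T.cluster

/-- `T` displays (is a refinement of) the tree `T'` on the same leaf set,
i.e. `T'` can be obtained from `T` by contracting edges; equivalently, every
cluster of `T'` is a cluster of `T`. -/
def LeafTree.Displays (T T' : LeafTree V) : Prop :=
  T'.clusters ⊆ T.clusters

/-- An isomorphism between two trees on the leaf set `V` fixing the leaves. -/
def LeafIso (T₁ T₂ : LeafTree V) : Prop :=
  ∃ f : T₁.toPPTree.V ≃ T₂.toPPTree.V,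
    (∀ x : V, f (T₁.emb x) = T₂.emb x) ∧
    f T₁.root = T₂.root ∧
    ∀ v, f (T₁.toPPTree.parent v) = T₂.toPPTree.parent (f v)

namespace LeafTree

open PPTree

variable {A B : LeafTree V} {u v : A.V}

theorem emb_ne_root (x : V) : A.emb x ≠ A.root :=
  fun h => A.rho_ne_root ((h ▸ A.emb_leaf x) _ parent_rho)

theorem cluster_mono (h : A.le u v) : A.cluster u ⊆ A.cluster v := fun _ hx => le_trans hx h

theorem cluster_root : A.cluster A.root = Set.univ :=
  Set.eq_univ_of_forall fun _ => le_root _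

theorem cluster_rho : A.cluster A.rho = Set.univ :=
  Set.eq_univ_of_forall fun x => le_rho (emb_ne_root x)

theorem cluster_emb (x : V) : A.cluster (A.emb x) = {x} :=
  Set.ext fun _ => ⟨fun h => A.emb_inj (eq_of_le_leaf (A.emb_leaf x) h), fun h => h ▸ le_refl _⟩

theorem cluster_nonempty (v : A.V) : (A.cluster v).Nonempty := by
  obtain ⟨l, hl, hlv⟩ := exists_leaf_le v
  obtain ⟨x, rfl⟩ := A.emb_surj l hl
  exact ⟨x, hlv⟩

theorem cluster_ssubset (h : A.le u v) (hne : u ≠ v) (hv : v ≠ A.root) :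
    A.cluster u ⊂ A.cluster v := by
  obtain ⟨c, hc, hcv, huc⟩ := exists_child_le h hne
  obtain ⟨c', hc', hc'v, hcc'⟩ : ∃ c', A.parent c' = v ∧ c' ≠ v ∧ c ≠ c' := by
    obtain ⟨c₁, c₂, hc₁, hc₂, hc₁₂, hc₁v, hc₂v⟩ := A.phylo v hv ⟨c, hc, hcv⟩
    by_cases hcc₁ : c = c₁
    · exact ⟨c₂, hc₂, hc₂v, hcc₁ ▸ hc₁₂⟩
    · exact ⟨c₁, hc₁, hc₁v, hcc₁⟩
  refine ⟨cluster_mono h, fun hsub => ?_⟩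
  obtain ⟨x, hx⟩ := A.cluster_nonempty c'
  have hxc : A.le (A.emb x) c := le_trans (hsub (cluster_mono (hc' ▸ le_parent c') hx)) huc
  rcases le_total_of_le hxc hx with hcc | hcc
  · exact hcc' (eq_of_le_of_parent_eq hcc (hc.trans hc'.symm) (hc' ▸ hc'v.symm))
  · exact hcc' (eq_of_le_of_parent_eq hcc (hc'.trans hc.symm) (hc ▸ hcv.symm)).symm

theorem le_of_cluster_subset (hu : u ≠ A.root) (h : A.cluster u ⊆ A.cluster v) : A.le u v := by
  obtain ⟨x, hx⟩ := A.cluster_nonempty u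
  rcases le_total_of_le hx (h hx) with huv | hvu
  · exact huv
  · by_cases hvu' : v = u
    · exact hvu' ▸ le_refl v
    · exact absurd h (cluster_ssubset hvu hvu' hu).not_subset

theorem eq_of_cluster_eq (hu : u ≠ A.root) (hv : v ≠ A.root) (h : A.cluster u = A.cluster v) :
    u = v :=
  le_antisymm (le_of_cluster_subset hu h.le) (le_of_cluster_subset hv h.ge)

theorem exists_ne_root_cluster_eq {C : Set V} (hC : C ∈ A.clusters) :
    ∃ v, v ≠ A.root ∧ A.cluster v = C := by
  obtain ⟨v, rfl⟩ := hC
  by_cases hv : v = A.root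
  · exact ⟨A.rho, A.rho_ne_root, by rw [hv, cluster_rho, cluster_root]⟩
  · exact ⟨v, hv, rfl⟩

theorem parent_eq_root_iff (hv : v ≠ A.root) : A.parent v = A.root ↔ A.cluster v = Set.univ :=
  ⟨fun h => eq_rho hv h ▸ cluster_rho, fun h => by
    rw [eq_of_cluster_eq hv A.rho_ne_root (h.trans cluster_rho.symm), parent_rho]⟩

theorem isLeast_cluster_parent (hv : v ≠ A.root) (hpv : A.parent v ≠ A.root) :
    IsLeast {D | D ∈ A.clusters ∧ A.cluster v ⊂ D} (A.cluster (A.parent v)) := by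
  refine ⟨⟨⟨_, rfl⟩, cluster_ssubset (le_parent v) (parent_ne_self hv).symm hpv⟩, ?_⟩
  rintro _ ⟨⟨w, rfl⟩, hvw⟩
  have hne : v ≠ w := by rintro rfl; exact hvw.ne rfl
  exact cluster_mono (parent_le_of_le_of_ne (le_of_cluster_subset hv hvw.subset) hne)

theorem cluster_mem_of_clusters_eq (h : A.clusters = B.clusters) (v : A.V) :
    A.cluster v ∈ B.clusters :=
  h ▸ Set.mem_range_self v

noncomputable def clusterMap (h : A.clusters = B.clusters) (v : A.V) : B.V :=
  if v = A.root then B.root else (exists_ne_root_cluster_eq (cluster_mem_of_clusters_eq h v)).choose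

theorem clusterMap_root (h : A.clusters = B.clusters) : clusterMap h A.root = B.root :=
  if_pos rfl

theorem clusterMap_spec (h : A.clusters = B.clusters) (hv : v ≠ A.root) :
    clusterMap h v ≠ B.root ∧ B.cluster (clusterMap h v) = A.cluster v := by
  rw [clusterMap, if_neg hv]
  exact (exists_ne_root_cluster_eq (cluster_mem_of_clusters_eq h v)).choose_spec

theorem clusterMap_clusterMap (h : A.clusters = B.clusters) (v : A.V) :
    clusterMap h.symm (clusterMap h v) = v := by
  by_cases hv : v = A.root
  · rw [hv, clusterMap_root, clusterMap_root]
  · obtain ⟨hne, hcl⟩ := clusterMap_spec h hv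
    obtain ⟨hne', hcl'⟩ := clusterMap_spec h.symm hne
    exact eq_of_cluster_eq hne' hv (hcl'.trans hcl)

theorem clusterMap_emb (h : A.clusters = B.clusters) (x : V) :
    clusterMap h (A.emb x) = B.emb x := by
  obtain ⟨hne, hcl⟩ := clusterMap_spec h (emb_ne_root x)
  exact eq_of_cluster_eq hne (emb_ne_root x) (by rw [hcl, cluster_emb, cluster_emb])

theorem clusterMap_parent (h : A.clusters = B.clusters) (v : A.V) :
    clusterMap h (A.parent v) = B.parent (clusterMap h v) := by
  by_cases hv : v = A.root
  · rw [hv, A.parent_root, clusterMap_root, B.parent_root]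
  obtain ⟨hne, hcl⟩ := clusterMap_spec h hv
  have hroot : B.parent (clusterMap h v) = B.root ↔ A.parent v = A.root := by
    rw [parent_eq_root_iff hne, hcl, parent_eq_root_iff hv]
  by_cases hpv : A.parent v = A.root
  · rw [hpv, clusterMap_root, hroot.2 hpv]
  obtain ⟨hpne, hpcl⟩ := clusterMap_spec h hpv
  have hleast := isLeast_cluster_parent hne (mt hroot.1 hpv)
  rw [← h, hcl] at hleast
  exact eq_of_cluster_eq hpne (mt hroot.1 hpv)
    (hpcl.trans ((isLeast_cluster_parent hv hpv).unique hleast))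

theorem leafIso_of_clusters_eq (h : A.clusters = B.clusters) : LeafIso A B :=
  ⟨⟨clusterMap h, clusterMap h.symm, clusterMap_clusterMap h, clusterMap_clusterMap h.symm⟩,
    clusterMap_emb h, clusterMap_root h, clusterMap_parent h⟩

end LeafTree

theorem LeafTree.isHierarchy_clusters (A : LeafTree V) : IsHierarchy A.clusters where
  univ_mem := ⟨A.root, LeafTree.cluster_root⟩
  singleton_mem x := ⟨A.emb x, LeafTree.cluster_emb x⟩
  empty_not_mem := fun ⟨v, hv⟩ => (A.cluster_nonempty v).ne_empty hv
  laminar := by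
    rintro _ ⟨u, rfl⟩ _ ⟨v, rfl⟩
    by_cases hdisj : Disjoint (A.cluster u) (A.cluster v)
    · exact Or.inr (Or.inr hdisj)
    obtain ⟨x, hxu, hxv⟩ := Set.not_disjoint_iff.1 hdisj
    exact (PPTree.le_total_of_le hxu hxv).imp LeafTree.cluster_mono
      (Or.inl ∘ LeafTree.cluster_mono)

noncomputable def treeOfHierarchy {H : Set (Set V)} (hH : IsHierarchy H) : LeafTree V where
  V := Option H
  fintypeV := Fintype.ofFinite _
  decEqV := Classical.decEq _
  root := none
  parent := hH.parent
  parent_root := rfl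
  reach := hH.exists_iterate_parent_eq_none
  planted := hH.existsUnique_parent_eq_none
  phylo := hH.exists_two_children
  emb x := some ⟨{x}, hH.singleton_mem x⟩
  emb_inj _ _ h := Set.singleton_eq_singleton_iff.1 (congrArg Subtype.val (Option.some_inj.1 h))
  emb_leaf x u hu := absurd hu (hH.parent_ne_singleton u x)
  emb_surj := hH.exists_singleton_of_isLeaf

theorem clusters_treeOfHierarchy {H : Set (Set V)} (hH : IsHierarchy H) :
    (treeOfHierarchy hH).clusters = H := by
  have hsome : ∀ C : H, (treeOfHierarchy hH).cluster (some C) = C.1 := fun C =>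
    Set.ext fun _ => (hH.exists_iterate_parent_eq_some_iff).trans Set.singleton_subset_iff
  ext C
  constructor
  · rintro ⟨_ | D, rfl⟩
    · exact (LeafTree.cluster_root (A := treeOfHierarchy hH)) ▸ hH.univ_mem
    · exact (hsome D).symm ▸ D.2
  · exact fun hC => ⟨some ⟨C, hC⟩, hsome ⟨C, hC⟩⟩

section BestMatch

open PPTree LeafTree

variable {Y : Type} {G : V → V → Prop} {σ : V → Y} {A A₀ : LeafTree V} {C : Set V}
  {a b c x y : V}

namespace Explains

theorem lca_le_lca (hA : Explains A σ G) (h : G x y) {y' : V} (hy : σ y' = σ y) :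
    A.le (A.lca (A.emb x) (A.emb y)) (A.lca (A.emb x) (A.emb y')) :=
  ((hA x y).1 h).2 y' hy

theorem exists_adj (hA : Explains A σ G) (hσ : σ x ≠ σ y) : ∃ y', σ y' = σ y ∧ G x y' := by
  obtain ⟨_, ⟨y', hy', rfl⟩, hmin⟩ := exists_forall_le_of_forall_le
    (S := (fun y' => A.lca (A.emb x) (A.emb y')) '' {y' | σ y' = σ y}) ⟨_, y, rfl, rfl⟩
    (by rintro _ ⟨y', -, rfl⟩; exact le_lca_left _ _)
  exact ⟨y', hy', (hA x y').2 ⟨hy'.symm ▸ hσ, fun y'' hy'' => hmin _ ⟨y'', hy''.trans hy', rfl⟩⟩⟩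

theorem not_le_lca_of_informative (hA : Explains A σ G) (h : Informative G σ a b c) :
    ¬ A.le (A.emb c) (A.lca (A.emb a) (A.emb b)) := by
  obtain ⟨-, -, -, hσab, hσbc, hGab, hnGac⟩ := h
  refine fun hc => hnGac ((hA a c).2 ⟨hσbc ▸ hσab, fun y hy => ?_⟩)
  exact le_trans (lca_le (le_lca_left _ _) hc) (hA.lca_le_lca hGab (hy.trans hσbc.symm))

theorem le_lca_of_forbidden (hA : Explains A σ G) (h : Forbidden G σ a b c) :
    A.le (A.emb c) (A.lca (A.emb a) (A.emb b)) := by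
  obtain ⟨-, -, -, -, hσbc, -, hGac⟩ := h
  exact le_trans (le_lca_right _ _) (hA.lca_le_lca hGac hσbc)

theorem lca_lt_of_ahoGraph_adj (hA : Explains A σ G) {u : A.V}
    (h : (ahoGraph G σ (A.cluster u)).Adj x y) : A.lt (A.lca (A.emb x) (A.emb y)) u := by
  rcases ((SimpleGraph.fromRel_adj _ _ _).1 h).2 with ⟨hx, hy, c, hc, hinf⟩ | ⟨hy, hx, c, hc, hinf⟩
  · exact ⟨lca_le hx hy, fun h => hA.not_le_lca_of_informative hinf (h ▸ hc)⟩
  · rw [lca_comm]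
    exact ⟨lca_le hy hx, fun h => hA.not_le_lca_of_informative hinf (h ▸ hc)⟩

/-- A leaf `y` below `v` of the colour of `b` is a best match of `a`, giving `ay|c`; if there is
none, then `b` is a best match of any leaf `z` below `v`, giving `zb|c`. -/
theorem exists_informative_le (hA : Explains A σ G) (h : Informative G σ a b c) {v : A.V}
    (hvab : A.le (A.parent v) (A.lca (A.emb a) (A.emb b)))
    (hab : A.le (A.emb a) (A.parent v) ∨ A.le (A.emb b) (A.parent v)) :
    ∃ y, A.le (A.emb y) v ∧ (Informative G σ a y c ∨ Informative G σ y b c) := by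
  have hcq := hA.not_le_lca_of_informative h
  obtain ⟨-, hac, hbc, hσab, hσbc, hGab, hnGac⟩ := h
  have hvq : A.le v (A.lca (A.emb a) (A.emb b)) := le_trans (le_parent v) hvab
  by_cases hcol : ∃ y, A.le (A.emb y) v ∧ σ y = σ b
  · obtain ⟨y, hyv, hσy⟩ := hcol
    have hyq := le_trans hyv hvq
    have hσay : σ a ≠ σ y := hσy ▸ hσab
    have hGay : G a y := (hA a y).2 ⟨hσay, fun y' hy' =>
      le_trans (lca_le (le_lca_left _ _) hyq) (hA.lca_le_lca hGab (hy'.trans hσy))⟩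
    exact ⟨y, hyv, Or.inl ⟨ne_of_apply_ne σ hσay, hac, fun hyc => hcq (hyc ▸ hyq), hσay,
      hσy.trans hσbc, hGay, hnGac⟩⟩
  push Not at hcol
  obtain ⟨z, hz⟩ := A.cluster_nonempty v
  have hσzb : σ z ≠ σ b := hcol z hz
  have hGzb : G z b := by
    refine (hA z b).2 ⟨hσzb, fun y' hy' => lca_le (le_lca_left _ _) ?_⟩
    have hpr : A.le (A.parent v) (A.lca (A.emb z) (A.emb y')) :=
      (le_or_parent_le hz (le_lca_left _ _)).resolve_left
        fun hr => hcol y' (le_trans (le_lca_right _ _) hr) hy'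
    rcases hab with ha | hb
    · exact le_trans (le_lca_right _ _)
        (le_trans (hA.lca_le_lca hGab hy') (lca_le (le_trans ha hpr) (le_lca_right _ _)))
    · exact le_trans hb hpr
  refine ⟨z, hz, Or.inr ⟨ne_of_apply_ne σ hσzb, ne_of_apply_ne σ (hσbc ▸ hσzb), hbc, hσzb,
    hσbc, hGzb, fun hGzc => hcq ?_⟩⟩
  exact le_trans (le_lca_right _ _)
    (le_trans (hA.lca_le_lca hGzc hσbc) (lca_le (le_trans hz hvq) (le_lca_right _ _)))

theorem exists_ahoGraph_adj_le (hA : Explains A σ G) (hab : (ahoGraph G σ C).Adj a b) {v : A.V}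
    (hvC : A.cluster v ⊆ C) (hvab : A.le (A.parent v) (A.lca (A.emb a) (A.emb b)))
    (ha : A.le (A.emb a) (A.parent v)) :
    ∃ y, A.le (A.emb y) v ∧ ((ahoGraph G σ C).Adj a y ∨ (ahoGraph G σ C).Adj b y) := by
  rcases ((SimpleGraph.fromRel_adj _ _ _).1 hab).2 with ⟨haC, hbC, c, hc, h⟩ | ⟨hbC, haC, c, hc, h⟩
  · obtain ⟨y, hy, h'⟩ := hA.exists_informative_le h hvab (Or.inl ha)
    exact ⟨y, hy, h'.imp (ahoGraph_adj_of_informative haC (hvC hy) hc)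
      fun h' => (ahoGraph_adj_of_informative (hvC hy) hbC hc h').symm⟩
  · rw [lca_comm] at hvab
    obtain ⟨y, hy, h'⟩ := hA.exists_informative_le h hvab (Or.inr ha)
    exact ⟨y, hy, (h'.imp (ahoGraph_adj_of_informative hbC (hvC hy) hc)
      fun h' => (ahoGraph_adj_of_informative (hvC hy) haC hc h').symm).symm⟩

/-- If no leaf of the component lay below `v`, the component, whose lca `w` lies above
`parent v`, would leave the child of `parent v` containing `k` along an Aho edge, and
`exists_informative_le` would put one of its leaves below `v`. -/
theorem exists_reachable_le_of_parent (hA : Explains A σ G) {v w : A.V}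
    (hwC : A.cluster w ⊆ C)
    (hw : ∀ x, (∀ b, (ahoGraph G σ C).Reachable a b → A.le (A.emb b) x) → A.le w x)
    (hpw : A.le (A.parent v) w)
    (hp : ∃ k, (ahoGraph G σ C).Reachable a k ∧ A.le (A.emb k) (A.parent v)) :
    ∃ k, (ahoGraph G σ C).Reachable a k ∧ A.le (A.emb k) v := by
  obtain ⟨k, hak, hkp⟩ := hp
  by_contra hv
  push Not at hv
  have hkp' : A.emb k ≠ A.parent v := fun h => hv k hak (A.emb_leaf k v h.symm ▸ le_refl _)
  obtain ⟨p₁, hp₁, hp₁ne, hkp₁⟩ := exists_child_le hkp hkp'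
  obtain ⟨k', hak', hk'p₁⟩ : ∃ k', (ahoGraph G σ C).Reachable a k' ∧ ¬ A.le (A.emb k') p₁ := by
    by_contra! hall
    exact hp₁ne (le_antisymm (hp₁ ▸ le_parent p₁) (le_trans hpw (hw p₁ hall)))
  obtain ⟨x, x', hkx, hxx', hxp₁, hx'p₁⟩ := (hak.symm.trans hak').exists_adj_mem_not_mem
    (S := {y | A.le (A.emb y) p₁}) hkp₁ hk'p₁
  have hax := hak.trans hkx
  have hpx : A.le (A.parent v) (A.lca (A.emb x) (A.emb x')) := hp₁ ▸
    (le_or_parent_le hxp₁ (le_lca_left _ _)).resolve_left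
      fun h => hx'p₁ (le_trans (le_lca_right _ _) h)
  obtain ⟨y, hyv, hy⟩ := hA.exists_ahoGraph_adj_le hxx'
    ((cluster_mono (le_trans (le_parent v) hpw)).trans hwC) hpx
    (hp₁ ▸ le_trans hxp₁ (le_parent p₁))
  refine hv y ?_ hyv
  exact hy.elim (fun h => hax.trans h.reachable)
    fun h => (hax.trans hxx'.reachable).trans h.reachable

theorem ahoComponent_mem_clusters (hA : Explains A σ G) (hC : C ∈ A.clusters) (ha : a ∈ C) :
    {b | (ahoGraph G σ C).Reachable a b} ∈ A.clusters := by
  obtain ⟨u, rfl⟩ := hC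
  set K := {b | (ahoGraph G σ (A.cluster u)).Reachable a b}
  obtain ⟨hwK, hw⟩ := lcaSet_spec (T := A.toPPTree) (S := A.emb '' K) ⟨_, a, .refl a, rfl⟩
  have hw' : ∀ x, (∀ b, (ahoGraph G σ (A.cluster u)).Reachable a b → A.le (A.emb b) x) →
      A.le (A.lcaSet (A.emb '' K)) x := fun x hx => hw x (by rintro _ ⟨b, hb, rfl⟩; exact hx b hb)
  have hwu := hw' u fun b hb => mem_of_ahoGraph_reachable (C := A.cluster u) ha hb
  refine ⟨_, Set.Subset.antisymm (fun z hz => ?_) fun b hb => hwK _ ⟨b, hb, rfl⟩⟩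
  obtain ⟨k, hak, hkz⟩ := le_induction (P := fun v =>
      ∃ k, (ahoGraph G σ (A.cluster u)).Reachable a k ∧ A.le (A.emb k) v)
    ⟨a, .refl a, hwK _ ⟨a, .refl a, rfl⟩⟩
    (fun v hpw hp => hA.exists_reachable_le_of_parent (cluster_mono hwu) hw' hpw hp) hz
  rwa [A.emb_inj (eq_of_le_leaf (A.emb_leaf z) hkz)] at hak

theorem ahoComponent_ssubset (hA : Explains A σ G) {u : A.V} (hu : u ≠ A.root)
    (ha : A.le (A.emb a) u) (hau : A.emb a ≠ u) :
    {b | (ahoGraph G σ (A.cluster u)).Reachable a b} ⊂ A.cluster u := by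
  obtain ⟨u₁, hu₁, hu₁u, hau₁⟩ := exists_child_le ha hau
  have hK : ∀ b, Relation.ReflTransGen (ahoGraph G σ (A.cluster u)).Adj a b →
      A.le (A.emb b) u₁ := by
    intro b hb
    induction hb with
    | refl => exact hau₁
    | tail _ hxy ih =>
      obtain ⟨hle, hne⟩ := hA.lca_lt_of_ahoGraph_adj hxy
      refine (le_or_parent_le ih (le_lca_left _ _)).elim (fun h => le_trans (le_lca_right _ _) h)
        fun h => absurd (le_antisymm hle (hu₁ ▸ h)) hne
  exact ssubset_of_subset_of_ssubset
    (fun b hb => hK b ((SimpleGraph.reachable_iff_reflTransGen _ _).1 hb))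
    (cluster_ssubset (hu₁ ▸ le_parent u₁) hu₁u hu)

end Explains

theorem explains_of_informative_of_forbidden (hA₀ : Explains A₀ σ G)
    (hinf : ∀ a b c, Informative G σ a b c → ¬ A.le (A.emb c) (A.lca (A.emb a) (A.emb b)))
    (hforb : ∀ a b c, Forbidden G σ a b c → A.le (A.emb c) (A.lca (A.emb a) (A.emb b))) :
    Explains A σ G := by
  refine fun x y => ⟨fun hG => ?_, fun ⟨hσ, hbm⟩ => ?_⟩
  · have hσ := ((hA₀ x y).1 hG).1
    refine ⟨hσ, fun y' hy' => ?_⟩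
    by_cases hyy' : y' = y
    · exact hyy' ▸ le_refl _
    by_cases hG' : G x y'
    · have hσ' := ((hA₀ x y').1 hG').1
      exact lca_le (le_lca_left _ _) (hforb x y' y
        ⟨ne_of_apply_ne σ hσ', ne_of_apply_ne σ hσ, hyy', hσ', hy', hG', hG⟩)
    · have hsep := hinf x y y' ⟨ne_of_apply_ne σ hσ, ne_of_apply_ne σ (hy' ▸ hσ),
        Ne.symm hyy', hσ, hy'.symm, hG, hG'⟩
      refine (le_total_of_le (le_lca_left _ _) (le_lca_left _ _)).resolve_right fun h => hsep ?_
      exact le_trans (le_lca_right _ _) h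
  · by_contra hG
    obtain ⟨y', hy', hG'⟩ := hA₀.exists_adj hσ
    have hσ' := ((hA₀ x y').1 hG').1
    have hyy' : y' ≠ y := fun h => hG (h ▸ hG')
    refine hinf x y' y ⟨ne_of_apply_ne σ hσ', ne_of_apply_ne σ hσ, hyy', hσ', hy', hG', hG⟩ ?_
    exact le_trans (le_lca_right _ _) (hbm y' hy')

theorem LeafTree.Displays.le_lca_of_le_lca {T T' : LeafTree V} (h : T.Displays T')
    (hc : T.le (T.emb c) (T.lca (T.emb a) (T.emb b))) :
    T'.le (T'.emb c) (T'.lca (T'.emb a) (T'.emb b)) := by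
  obtain ⟨u, hu⟩ := h (Set.mem_range_self (T'.lca (T'.emb a) (T'.emb b)))
  have ha : a ∈ T.cluster u := hu ▸ le_lca_left _ _
  have hb : b ∈ T.cluster u := hu ▸ le_lca_right _ _
  have hc' : c ∈ T.cluster u := le_trans hc (lca_le ha hb)
  rw [hu] at hc'
  exact hc'

def commonClusters (G : V → V → Prop) (σ : V → Y) : Set (Set V) :=
  {C | ∀ T : LeafTree V, Explains T σ G → C ∈ T.clusters}

theorem isHierarchy_commonClusters (hA₀ : Explains A₀ σ G) :
    IsHierarchy (commonClusters G σ) where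
  univ_mem T _ := T.isHierarchy_clusters.univ_mem
  singleton_mem x T _ := T.isHierarchy_clusters.singleton_mem x
  empty_not_mem h := A₀.isHierarchy_clusters.empty_not_mem (h A₀ hA₀)
  laminar C hC D hD := A₀.isHierarchy_clusters.laminar C (hC A₀ hA₀) D (hD A₀ hA₀)

/-- The cluster of `lca(a,b)` in a tree carrying exactly the common clusters cannot contain `c`:
otherwise the Aho component of `a` in it would be a smaller common cluster containing `a, b`. -/
theorem not_le_lca_of_clusters_eq_commonClusters (hA₀ : Explains A₀ σ G)
    (hA : A.clusters = commonClusters G σ) (h : Informative G σ a b c) :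
    ¬ A.le (A.emb c) (A.lca (A.emb a) (A.emb b)) := by
  intro hc
  set C := A.cluster (A.lca (A.emb a) (A.emb b))
  have hCcommon : C ∈ commonClusters G σ := hA ▸ Set.mem_range_self _
  have haC : a ∈ C := le_lca_left _ _
  have hbC : b ∈ C := le_lca_right _ _
  have hab : (ahoGraph G σ C).Reachable a b := (ahoGraph_adj_of_informative haC hbC hc h).reachable
  obtain ⟨k, hk⟩ : {y | (ahoGraph G σ C).Reachable a y} ∈ A.clusters :=
    hA ▸ fun T hT => hT.ahoComponent_mem_clusters (hCcommon T hT) haC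
  have haK : a ∈ A.cluster k := by rw [hk]; exact .refl a
  have hbK : b ∈ A.cluster k := by rw [hk]; exact hab
  have hCK : C ⊆ A.cluster k := cluster_mono (lca_le haK hbK)
  obtain ⟨u, hu, huC⟩ := exists_ne_root_cluster_eq (hCcommon A₀ hA₀)
  have hau : A₀.emb a ≠ u := by
    rintro rfl
    have hba : b ∈ A₀.cluster (A₀.emb a) := by rw [huC]; exact hbC
    exact h.1 (A₀.emb_inj (eq_of_le_leaf (A₀.emb_leaf a) hba)).symm
  have hau' : a ∈ A₀.cluster u := by rw [huC]; exact haC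
  have hKC := hA₀.ahoComponent_ssubset hu hau' hau
  rw [huC, ← hk] at hKC
  exact hKC.not_subset hCK

end BestMatch

/-- Every best match graph `(G,σ)` has a least-resolved tree,
unique up to isomorphism fixing the leaves: a tree `T*` explaining `(G,σ)`
that is displayed by every tree explaining `(G,σ)`. -/
theorem bmg_least_resolved_tree
    {Y : Type} (G : V → V → Prop) (σ : V → Y)
    (hBMG : ∃ T : LeafTree V, Explains T σ G) :
    ∃ Tstar : LeafTree V, Explains Tstar σ G ∧
      (∀ T : LeafTree V, Explains T σ G → T.Displays Tstar) ∧
      (∀ T₁ T₂ : LeafTree V,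
        (Explains T₁ σ G ∧ ∀ T : LeafTree V, Explains T σ G → T.Displays T₁) →
        (Explains T₂ σ G ∧ ∀ T : LeafTree V, Explains T σ G → T.Displays T₂) →
        LeafIso T₁ T₂) := by
  obtain ⟨T₀, hT₀⟩ := hBMG
  have hH := isHierarchy_commonClusters hT₀
  have hcl := clusters_treeOfHierarchy hH
  have hdisp : ∀ T : LeafTree V, Explains T σ G → T.Displays (treeOfHierarchy hH) :=
    fun T hT C hC => (hcl ▸ hC : C ∈ commonClusters G σ) T hT
  refine ⟨treeOfHierarchy hH, ?_, hdisp, ?_⟩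
  · exact explains_of_informative_of_forbidden hT₀
      (fun _ _ _ h => not_le_lca_of_clusters_eq_commonClusters hT₀ hcl h)
      (fun _ _ _ h => (hdisp T₀ hT₀).le_lca_of_le_lca (hT₀.le_lca_of_forbidden h))
  · rintro T₁ T₂ ⟨hT₁, hD₁⟩ ⟨hT₂, hD₂⟩
    exact LeafTree.leafIso_of_clusters_eq (subset_antisymm (hD₁ T₂ hT₂) (hD₂ T₁ hT₁))

end LeastResolved
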